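/- arXiv:1706.05321 — 4 statements merged into one kernel-verified Lean document; each statement's English description precedes it below -/
import Mathlib

section
/- Let γ, v : ℝ → ℝ³ be a smooth Legendre curve in UTS² (|γ|=|v|=1, ⟨γ,v⟩=0, ⟨γ',v⟩=0), η = γ × v, and let β be a primitive of η (β' = η). Then γ and v are RM vector fields along β: that is, γ'(s) and v'(s) are scalar multiples of β'(s) = η(s) for all s. -/
open scoped RealInnerProductSpace

noncomputable def cross (a b : EuclideanSpace ℝ (Fin 3)) : EuclideanSpace ℝ (Fin 3) :=
  WithLp.toLp 2 ![a 1 * b 2 - a 2 * b 1, a 2 * b 0 - a 0 * b 2, a 0 * b 1 - a 1 * b 0]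

noncomputable def det3 (a b c : EuclideanSpace ℝ (Fin 3)) : ℝ := ⟪a, cross b c⟫

noncomputable def v3 (x y z : ℝ) : EuclideanSpace ℝ (Fin 3) := WithLp.toLp 2 ![x, y, z]

lemma key (a b w : EuclideanSpace ℝ (Fin 3)) (ha : ⟪a, a⟫ = 1) (hb : ⟪b, b⟫ = 1)
    (hab : ⟪a, b⟫ = 0) (hwa : ⟪w, a⟫ = 0) (hwb : ⟪w, b⟫ = 0) :
    w = ⟪w, cross a b⟫ • cross a b := by
  simp only [PiLp.inner_apply, RCLike.inner_apply, starRingEnd_apply, star_trivial,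
    Fin.sum_univ_three, cross, PiLp.toLp_apply, Matrix.cons_val_zero, Matrix.cons_val_one, Matrix.head_cons,
    Matrix.cons_val_two, Matrix.tail_cons] at *
  have hs : ∀ (c : ℝ) (x : EuclideanSpace ℝ (Fin 3)) (i : Fin 3), (c • x) i = c * x i :=
    fun c x i => rfl
  ext i
  fin_cases i <;>
    simp only [Fin.zero_eta, Fin.mk_one, Fin.reduceFinMk, hs, cross, PiLp.toLp_apply, Matrix.cons_val_zero,
      Matrix.cons_val_one, Matrix.head_cons, Matrix.cons_val_two, Matrix.tail_cons]
  · linear_combination (-(w 0) * (b 0*b 0 + b 1*b 1 + b 2*b 2)) * ha + (-(w 0)) * hb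
      + (w 0 * (a 0*b 0 + a 1*b 1 + a 2*b 2)) * hab
      + (-((a 2*b 0 - a 0*b 2)*b 2 - (a 0*b 1 - a 1*b 0)*b 1)) * hwa
      + ((a 2*b 0 - a 0*b 2)*a 2 - (a 0*b 1 - a 1*b 0)*a 1) * hwb
  · linear_combination (-(w 1) * (b 0*b 0 + b 1*b 1 + b 2*b 2)) * ha + (-(w 1)) * hb
      + (w 1 * (a 0*b 0 + a 1*b 1 + a 2*b 2)) * hab
      + (-((a 0*b 1 - a 1*b 0)*b 0 - (a 1*b 2 - a 2*b 1)*b 2)) * hwa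
      + ((a 0*b 1 - a 1*b 0)*a 0 - (a 1*b 2 - a 2*b 1)*a 2) * hwb
  · linear_combination (-(w 2) * (b 0*b 0 + b 1*b 1 + b 2*b 2)) * ha + (-(w 2)) * hb
      + (w 2 * (a 0*b 0 + a 1*b 1 + a 2*b 2)) * hab
      + (-((a 1*b 2 - a 2*b 1)*b 1 - (a 2*b 0 - a 0*b 2)*b 0)) * hwa
      + ((a 1*b 2 - a 2*b 1)*a 1 - (a 2*b 0 - a 0*b 2)*a 0) * hwb

theorem stmt3 (γ v η β : ℝ → EuclideanSpace ℝ (Fin 3))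
    (hγ : ContDiff ℝ (⊤ : ℕ∞) γ) (hv : ContDiff ℝ (⊤ : ℕ∞) v) (hβ : ContDiff ℝ (⊤ : ℕ∞) β)
    (hγ1 : ∀ s, ‖γ s‖ = 1) (hv1 : ∀ s, ‖v s‖ = 1)
    (hortho : ∀ s, ⟪γ s, v s⟫ = 0) (hleg : ∀ s, ⟪deriv γ s, v s⟫ = 0)
    (hη : ∀ s, η s = cross (γ s) (v s))
    (hβ' : ∀ s, deriv β s = η s) :
    ∀ s, ∃ a b : ℝ, deriv γ s = a • deriv β s ∧ deriv v s = b • deriv β s := by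
  intro s
  have hγd : ∀ t, HasDerivAt γ (deriv γ t) t := fun t =>
    ((hγ.differentiable (by simp)) t).hasDerivAt
  have hvd : ∀ t, HasDerivAt v (deriv v t) t := fun t =>
    ((hv.differentiable (by simp)) t).hasDerivAt
  -- inner products are constant
  have hγγ : ∀ t, ⟪γ t, γ t⟫ = 1 := fun t => by
    rw [real_inner_self_eq_norm_sq, hγ1 t]; norm_num
  have hvv : ∀ t, ⟪v t, v t⟫ = 1 := fun t => by
    rw [real_inner_self_eq_norm_sq, hv1 t]; norm_num
  have dγγ : HasDerivAt (fun t => ⟪γ t, γ t⟫) (⟪γ s, deriv γ s⟫ + ⟪deriv γ s, γ s⟫) s :=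
    (hγd s).inner ℝ (hγd s)
  have dvv : HasDerivAt (fun t => ⟪v t, v t⟫) (⟪v s, deriv v s⟫ + ⟪deriv v s, v s⟫) s :=
    (hvd s).inner ℝ (hvd s)
  have dγv : HasDerivAt (fun t => ⟪γ t, v t⟫) (⟪γ s, deriv v s⟫ + ⟪deriv γ s, v s⟫) s :=
    (hγd s).inner ℝ (hvd s)
  have e1 : ⟪γ s, deriv γ s⟫ + ⟪deriv γ s, γ s⟫ = 0 := by
    have : HasDerivAt (fun _ : ℝ => (1 : ℝ)) 0 s := hasDerivAt_const s 1
    have := ((funext hγγ : (fun t => ⟪γ t, γ t⟫) = fun _ => 1) ▸ dγγ).unique this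
    linarith
  have e2 : ⟪v s, deriv v s⟫ + ⟪deriv v s, v s⟫ = 0 := by
    have : HasDerivAt (fun _ : ℝ => (1 : ℝ)) 0 s := hasDerivAt_const s 1
    have := ((funext hvv : (fun t => ⟪v t, v t⟫) = fun _ => 1) ▸ dvv).unique this
    linarith
  have e3 : ⟪γ s, deriv v s⟫ + ⟪deriv γ s, v s⟫ = 0 := by
    have : HasDerivAt (fun _ : ℝ => (0 : ℝ)) 0 s := hasDerivAt_const s 0
    have := ((funext hortho : (fun t => ⟪γ t, v t⟫) = fun _ => 0) ▸ dγv).unique this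
    linarith
  have hγ'γ : ⟪deriv γ s, γ s⟫ = 0 := by
    rw [real_inner_comm] at e1; linarith
  have hv'v : ⟪deriv v s, v s⟫ = 0 := by
    rw [real_inner_comm] at e2; linarith
  have hv'γ : ⟪deriv v s, γ s⟫ = 0 := by
    rw [real_inner_comm]
    have := hleg s; linarith
  have hβcross : deriv β s = cross (γ s) (v s) := by rw [hβ' s, hη s]
  refine ⟨⟪deriv γ s, cross (γ s) (v s)⟫, ⟪deriv v s, cross (γ s) (v s)⟫, ?_, ?_⟩ <;>
    rw [hβcross]
  · exact key _ _ _ (hγγ s) (hvv s) (hortho s) hγ'γ (hleg s)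
  · exact key _ _ _ (hγγ s) (hvv s) (hortho s) hv'γ (by rw [real_inner_comm] at hv'v ⊢; exact hv'v)
end

section
/- Let γ, v : ℝ → ℝ³ satisfy the Legendre conditions (|γ|=|v|=1, ⟨γ,v⟩=0, ⟨γ',v⟩=0), η = γ × v, β a primitive of η. Then all six ruled surfaces Φ(s,u) = a₁(s) + u·a₂(s), where (a₁,a₂) is any ordered pair of distinct elements of {β, γ, v}, are developable: det(a₁'(s), a₂(s), a₂'(s)) = 0 for all s. -/
open scoped RealInnerProductSpace

lemma key_s5 (a b x : EuclideanSpace ℝ (Fin 3))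
    (h1 : ⟪a, a⟫ = 1) (h2 : ⟪b, b⟫ = 1) (h3 : ⟪a, b⟫ = 0)
    (h4 : ⟪x, b⟫ = 0) (h5 : ⟪x, a⟫ = 0) :
    x = ⟪x, cross a b⟫ • cross a b := by
  simp only [PiLp.inner_apply, RCLike.inner_apply, conj_trivial, Fin.sum_univ_three, cross, PiLp.toLp_apply] at *
  ext i
  fin_cases i <;>
    simp only [PiLp.smul_apply, smul_eq_mul, Fin.zero_eta, Fin.mk_one, Fin.isValue,
      Matrix.cons_val_zero, Matrix.cons_val_one, Matrix.head_cons, Matrix.cons_val_two,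
      Matrix.tail_cons, Fin.reduceFinMk, PiLp.toLp_apply]
  · linear_combination (-(b 0*b 0+b 1*b 1+b 2*b 2) * x 0) * h1 + (- x 0) * h2 +
      ((a 0*b 0+a 1*b 1+a 2*b 2) * x 0) * h3 +
      ((a 0*a 0+a 1*a 1+a 2*a 2) * b 0 - (a 0*b 0+a 1*b 1+a 2*b 2) * a 0) * h4 +
      ((b 0*b 0+b 1*b 1+b 2*b 2) * a 0 - (a 0*b 0+a 1*b 1+a 2*b 2) * b 0) * h5
  · linear_combination (-(b 0*b 0+b 1*b 1+b 2*b 2) * x 1) * h1 + (- x 1) * h2 +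
      ((a 0*b 0+a 1*b 1+a 2*b 2) * x 1) * h3 +
      ((a 0*a 0+a 1*a 1+a 2*a 2) * b 1 - (a 0*b 0+a 1*b 1+a 2*b 2) * a 1) * h4 +
      ((b 0*b 0+b 1*b 1+b 2*b 2) * a 1 - (a 0*b 0+a 1*b 1+a 2*b 2) * b 1) * h5
  · linear_combination (-(b 0*b 0+b 1*b 1+b 2*b 2) * x 2) * h1 + (- x 2) * h2 +
      ((a 0*b 0+a 1*b 1+a 2*b 2) * x 2) * h3 +
      ((a 0*a 0+a 1*a 1+a 2*a 2) * b 2 - (a 0*b 0+a 1*b 1+a 2*b 2) * a 2) * h4 +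
      ((b 0*b 0+b 1*b 1+b 2*b 2) * a 2 - (a 0*b 0+a 1*b 1+a 2*b 2) * b 2) * h5

lemma det3_smul_eta (m n : ℝ) (η w : EuclideanSpace ℝ (Fin 3)) :
    det3 (m • η) w (n • η) = 0 := by
  simp only [det3, cross, PiLp.inner_apply, RCLike.inner_apply, conj_trivial,
    Fin.sum_univ_three, PiLp.smul_apply, smul_eq_mul, Matrix.cons_val_zero,
    Matrix.cons_val_one, Matrix.head_cons, Matrix.cons_val_two, Matrix.tail_cons, PiLp.toLp_apply]
  ring

theorem stmt5 (γ v η β : ℝ → EuclideanSpace ℝ (Fin 3))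
    (hγ : ContDiff ℝ (⊤ : ℕ∞) γ) (hv : ContDiff ℝ (⊤ : ℕ∞) v) (hβ : ContDiff ℝ (⊤ : ℕ∞) β)
    (hγ1 : ∀ s, ‖γ s‖ = 1) (hv1 : ∀ s, ‖v s‖ = 1)
    (hortho : ∀ s, ⟪γ s, v s⟫ = 0) (hleg : ∀ s, ⟪deriv γ s, v s⟫ = 0)
    (hη : ∀ s, η s = cross (γ s) (v s))
    (hβ' : ∀ s, deriv β s = η s) :
    ∀ s, det3 (deriv β s) (γ s) (deriv γ s) = 0 ∧
      det3 (deriv β s) (v s) (deriv v s) = 0 ∧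
      det3 (deriv γ s) (β s) (deriv β s) = 0 ∧
      det3 (deriv γ s) (v s) (deriv v s) = 0 ∧
      det3 (deriv v s) (β s) (deriv β s) = 0 ∧
      det3 (deriv v s) (γ s) (deriv γ s) = 0 := by
  intro s
  have hdγ : HasDerivAt γ (deriv γ s) s :=
    ((hγ.differentiable (by simp)) s).hasDerivAt
  have hdv : HasDerivAt v (deriv v s) s :=
    ((hv.differentiable (by simp)) s).hasDerivAt
  -- inner products with derivatives
  have hγγ : (∀ t, ⟪γ t, γ t⟫ = (1:ℝ)) := fun t => by
    rw [real_inner_self_eq_norm_sq, hγ1 t]; norm_num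
  have hvv : (∀ t, ⟪v t, v t⟫ = (1:ℝ)) := fun t => by
    rw [real_inner_self_eq_norm_sq, hv1 t]; norm_num
  have h5 : ⟪deriv γ s, γ s⟫ = 0 := by
    have h := (hdγ.inner ℝ hdγ)
    have h0 : HasDerivAt (fun t => ⟪γ t, γ t⟫) 0 s := by
      have : (fun t => ⟪γ t, γ t⟫) = fun _ => (1:ℝ) := funext hγγ
      rw [this]; exact hasDerivAt_const s 1
    have := h.unique h0
    have hsymm : ⟪γ s, deriv γ s⟫ = ⟪deriv γ s, γ s⟫ := real_inner_comm _ _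
    linarith [hsymm ▸ this]
  have h7 : ⟪deriv v s, v s⟫ = 0 := by
    have h := (hdv.inner ℝ hdv)
    have h0 : HasDerivAt (fun t => ⟪v t, v t⟫) 0 s := by
      have : (fun t => ⟪v t, v t⟫) = fun _ => (1:ℝ) := funext hvv
      rw [this]; exact hasDerivAt_const s 1
    have := h.unique h0
    have hsymm : ⟪v s, deriv v s⟫ = ⟪deriv v s, v s⟫ := real_inner_comm _ _
    linarith [hsymm ▸ this]
  have h6 : ⟪γ s, deriv v s⟫ = 0 := by
    have h := (hdγ.inner ℝ hdv)
    have h0 : HasDerivAt (fun t => ⟪γ t, v t⟫) 0 s := by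
      have : (fun t => ⟪γ t, v t⟫) = fun _ => (0:ℝ) := funext hortho
      rw [this]; exact hasDerivAt_const s 0
    have := h.unique h0
    linarith [hleg s, this]
  -- structural facts: deriv γ s and deriv v s are multiples of η s
  have hγ' : deriv γ s = ⟪deriv γ s, η s⟫ • η s := by
    rw [hη s]
    exact key_s5 (γ s) (v s) (deriv γ s) (hγγ s) (hvv s) (hortho s) (hleg s) h5
  have hv' : deriv v s = ⟪deriv v s, η s⟫ • η s := by
    rw [hη s]
    refine key_s5 (γ s) (v s) (deriv v s) (hγγ s) (hvv s) (hortho s) h7 ?_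
    rw [real_inner_comm]; exact h6
  have hβd : deriv β s = (1:ℝ) • η s := by rw [hβ' s, one_smul]
  refine ⟨?_, ?_, ?_, ?_, ?_, ?_⟩
  · rw [hβd, hγ']; exact det3_smul_eta _ _ _ _
  · rw [hβd, hv']; exact det3_smul_eta _ _ _ _
  · rw [hβd, hγ']; exact det3_smul_eta _ _ _ _
  · rw [hγ', hv']; exact det3_smul_eta _ _ _ _
  · rw [hβd, hv']; exact det3_smul_eta _ _ _ _
  · rw [hγ', hv']; exact det3_smul_eta _ _ _ _
end

section
/- Let γ, v : ℝ → ℝ³ be a smooth Legendre curve (|γ|=|v|=1, ⟨γ,v⟩=0, ⟨γ',v⟩=0), η = γ × v, β' = η, and m(s) = ⟨γ'(s), η(s)⟩. For the ruled surface Φ(s,u) = β(s) + u·γ(s), the cross product of partial derivatives satisfies ∂Φ/∂s × ∂Φ/∂u = (1 + u·m(s))·v(s); in particular (s,u) is a singular point of Φ if and only if 1 + u·m(s) = 0. -/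
open scoped RealInnerProductSpace

lemma inner3 (x y : EuclideanSpace ℝ (Fin 3)) :
    ⟪x, y⟫ = x 0 * y 0 + x 1 * y 1 + x 2 * y 2 := by
  simp [PiLp.inner_apply, Fin.sum_univ_three, RCLike.inner_apply, mul_comm]

theorem stmt6 (γ v η β : ℝ → EuclideanSpace ℝ (Fin 3)) (m : ℝ → ℝ)
    (hγ : ContDiff ℝ (⊤ : ℕ∞) γ) (hv : ContDiff ℝ (⊤ : ℕ∞) v) (hβ : ContDiff ℝ (⊤ : ℕ∞) β)
    (hγ1 : ∀ s, ‖γ s‖ = 1) (hv1 : ∀ s, ‖v s‖ = 1)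
    (hortho : ∀ s, ⟪γ s, v s⟫ = 0) (hleg : ∀ s, ⟪deriv γ s, v s⟫ = 0)
    (hη : ∀ s, η s = cross (γ s) (v s))
    (hβ' : ∀ s, deriv β s = η s)
    (hm : ∀ s, m s = ⟪deriv γ s, η s⟫) :
    ∀ s u : ℝ,
      cross (deriv (fun t => β t + u • γ t) s) (γ s) = (1 + u * m s) • v s ∧
      (cross (deriv (fun t => β t + u • γ t) s) (γ s) = 0 ↔ 1 + u * m s = 0) := by
  intro s u
  have hderiv : deriv (fun t => β t + u • γ t) s = η s + u • deriv γ s := by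
    have h1 : HasDerivAt (fun t => β t + u • γ t) (deriv β s + u • deriv γ s) s :=
      ((hβ.differentiable (by simp) s).hasDerivAt).add
        (((hγ.differentiable (by simp) s).hasDerivAt).const_smul u)
    rw [h1.deriv, hβ' s]
  set a := γ s with ha
  set b := v s with hb
  set c := deriv γ s with hc
  have hA : a 0 * a 0 + a 1 * a 1 + a 2 * a 2 = 1 := by
    have := real_inner_self_eq_norm_mul_norm a
    rw [inner3, hγ1 s] at this; linarith
  have hB : b 0 * b 0 + b 1 * b 1 + b 2 * b 2 = 1 := by
    have := real_inner_self_eq_norm_mul_norm b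
    rw [inner3, hv1 s] at this; linarith
  have hC : a 0 * b 0 + a 1 * b 1 + a 2 * b 2 = 0 := by
    have := hortho s; rwa [inner3] at this
  have hE : b 0 * c 0 + b 1 * c 1 + b 2 * c 2 = 0 := by
    have := hleg s; rw [inner3] at this; linarith
  have hmm : m s = c 0 * (a 1 * b 2 - a 2 * b 1) + c 1 * (a 2 * b 0 - a 0 * b 2)
      + c 2 * (a 0 * b 1 - a 1 * b 0) := by
    rw [hm s, inner3, hη s]
    simp [cross]
    rfl
  have hmain : cross (deriv (fun t => β t + u • γ t) s) a = (1 + u * m s) • b := by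
    rw [hderiv, hη s, hmm]
    ext i
    fin_cases i <;>
      simp [cross, PiLp.add_apply, PiLp.smul_apply, smul_eq_mul] <;> ring_nf
    · linear_combination b 0 * hA - u * (c 1 * a 2 - c 2 * a 1) * hB
        + (-(a 0) + u * (b 2 * c 1 - b 1 * c 2)) * hC + u * (b 1 * a 2 - b 2 * a 1) * hE
    · linear_combination b 1 * hA - u * (c 2 * a 0 - c 0 * a 2) * hB
        + (-(a 1) + u * (b 0 * c 2 - b 2 * c 0)) * hC + u * (b 2 * a 0 - b 0 * a 2) * hE
    · linear_combination b 2 * hA - u * (c 0 * a 1 - c 1 * a 0) * hB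
        + (-(a 2) + u * (b 1 * c 0 - b 0 * c 1)) * hC + u * (b 0 * a 1 - b 1 * a 0) * hE
  refine ⟨hmain, ?_⟩
  rw [hmain, smul_eq_zero]
  have hbne : b ≠ 0 := by
    intro h
    have h1 : ‖b‖ = 1 := hv1 s
    rw [h, norm_zero] at h1
    exact zero_ne_one h1
  constructor
  · rintro (h | h)
    · exact h
    · exact absurd h hbne
  · exact fun h => Or.inl h
end

section
/- Let γ, v be a smooth Legendre curve in UTS² with η = γ × v, β' = η, and m(s) = ⟨γ', η⟩ nowhere zero. Define the striction curve φ(s) = β(s) - (1/m(s))·γ(s) of the ruled surface Φ(s,u) = β(s) + u·γ(s). Then φ'(s) = -(1/m)'(s)·γ(s). Consequently, if m is constant then φ' ≡ 0, so all singular points of Φ coincide at a single point (the surface is a cone). -/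
open scoped RealInnerProductSpace

lemma key_frame (a b x : EuclideanSpace ℝ (Fin 3)) (ha : ⟪x,a⟫=0) (hb : ⟪x,b⟫=0)
    (h1 : ⟪a,a⟫=(1:ℝ)) (h2 : ⟪b,b⟫=(1:ℝ)) (h3 : ⟪a,b⟫=(0:ℝ)) :
    x = ⟪x, cross a b⟫ • cross a b := by
  simp only [PiLp.inner_apply, RCLike.inner_apply, conj_trivial, Fin.sum_univ_three, cross] at *
  ext i
  fin_cases i <;> simp
  · linear_combination (-(((a 2*b 0 - a 0*b 2))*(b 2) - ((a 0*b 1 - a 1*b 0))*(b 1))) * ha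
      + ((((a 2*b 0 - a 0*b 2))*(a 2) - ((a 0*b 1 - a 1*b 0))*(a 1))) * hb
      - x 0 * (b 0*b 0 + b 1*b 1 + b 2*b 2) * h1 - x 0 * h2
      + x 0 * (a 0*b 0 + a 1*b 1 + a 2*b 2) * h3
  · linear_combination (-(((a 0*b 1 - a 1*b 0))*(b 0) - ((a 1*b 2 - a 2*b 1))*(b 2))) * ha
      + ((((a 0*b 1 - a 1*b 0))*(a 0) - ((a 1*b 2 - a 2*b 1))*(a 2))) * hb
      - x 1 * (b 0*b 0 + b 1*b 1 + b 2*b 2) * h1 - x 1 * h2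
      + x 1 * (a 0*b 0 + a 1*b 1 + a 2*b 2) * h3
  · linear_combination (-(((a 1*b 2 - a 2*b 1))*(b 1) - ((a 2*b 0 - a 0*b 2))*(b 0))) * ha
      + ((((a 1*b 2 - a 2*b 1))*(a 1) - ((a 2*b 0 - a 0*b 2))*(a 0))) * hb
      - x 2 * (b 0*b 0 + b 1*b 1 + b 2*b 2) * h1 - x 2 * h2
      + x 2 * (a 0*b 0 + a 1*b 1 + a 2*b 2) * h3

lemma cross_diff (γ v : ℝ → EuclideanSpace ℝ (Fin 3)) (hγ : ContDiff ℝ (⊤ : ℕ∞) γ) (hv : ContDiff ℝ (⊤ : ℕ∞) v) :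
    Differentiable ℝ (fun s => cross (γ s) (v s)) := by
  have h1 : ∀ i, Differentiable ℝ (fun s => γ s i) :=
    fun i => fun s => ((EuclideanSpace.proj i : EuclideanSpace ℝ (Fin 3) →L[ℝ] ℝ).differentiableAt).comp s (hγ.differentiable (by simp) s)
  have h2 : ∀ i, Differentiable ℝ (fun s => v s i) :=
    fun i => fun s => ((EuclideanSpace.proj i : EuclideanSpace ℝ (Fin 3) →L[ℝ] ℝ).differentiableAt).comp s (hv.differentiable (by simp) s)
  have hpi : Differentiable ℝ (fun s => (![γ s 1 * v s 2 - γ s 2 * v s 1,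
      γ s 2 * v s 0 - γ s 0 * v s 2, γ s 0 * v s 1 - γ s 1 * v s 0] : Fin 3 → ℝ)) := by
    rw [differentiable_pi]
    intro i
    fin_cases i <;> simp <;> exact ((h1 _).mul (h2 _)).sub ((h1 _).mul (h2 _))
  exact ((PiLp.continuousLinearEquiv 2 ℝ (fun _ : Fin 3 => ℝ)).symm.differentiable).comp hpi

theorem stmt7 (γ v η β φ : ℝ → EuclideanSpace ℝ (Fin 3)) (m : ℝ → ℝ)
    (hγ : ContDiff ℝ (⊤ : ℕ∞) γ) (hv : ContDiff ℝ (⊤ : ℕ∞) v) (hβ : ContDiff ℝ (⊤ : ℕ∞) β)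
    (hγ1 : ∀ s, ‖γ s‖ = 1) (hv1 : ∀ s, ‖v s‖ = 1)
    (hortho : ∀ s, ⟪γ s, v s⟫ = 0) (hleg : ∀ s, ⟪deriv γ s, v s⟫ = 0)
    (hη : ∀ s, η s = cross (γ s) (v s))
    (hβ' : ∀ s, deriv β s = η s)
    (hm : ∀ s, m s = ⟪deriv γ s, η s⟫) (hm0 : ∀ s, m s ≠ 0)
    (hφ : ∀ s, φ s = β s - (1 / m s) • γ s) :
    (∀ s, deriv φ s = -(deriv (fun t => 1 / m t) s) • γ s) ∧
    ((∀ s t, m s = m t) → (∀ s, deriv φ s = 0) ∧ ∀ s t, φ s = φ t) := by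
  have hγd : Differentiable ℝ γ := hγ.differentiable (by simp)
  have hγ'd : Differentiable ℝ (deriv γ) := (contDiff_infty_iff_deriv.mp (hγ.of_le (by simp))).2.differentiable (by simp)
  have hβd : Differentiable ℝ β := hβ.differentiable (by simp)
  -- inner product facts
  have hgg : ∀ s, ⟪γ s, γ s⟫ = (1:ℝ) := fun s => by
    rw [real_inner_self_eq_norm_sq, hγ1]; norm_num
  have hvv : ∀ s, ⟪v s, v s⟫ = (1:ℝ) := fun s => by
    rw [real_inner_self_eq_norm_sq, hv1]; norm_num
  -- ⟪γ', γ⟫ = 0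
  have hga : ∀ s, ⟪deriv γ s, γ s⟫ = 0 := by
    intro s
    have hd : HasDerivAt γ (deriv γ s) s := (hγd s).hasDerivAt
    have h1 : HasDerivAt (fun t => ⟪γ t, γ t⟫) (⟪γ s, deriv γ s⟫ + ⟪deriv γ s, γ s⟫) s :=
      hd.inner ℝ hd
    have h2 : HasDerivAt (fun t => ⟪γ t, γ t⟫) 0 s := by
      have e : (fun t => ⟪γ t, γ t⟫) = fun _ => (1:ℝ) := funext fun t => hgg t
      rw [e]; exact hasDerivAt_const s 1
    have := h1.unique h2
    rw [real_inner_comm (γ s)] at this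
    rw [real_inner_comm]
    linarith
  -- γ' = m • η
  have hγ' : ∀ s, deriv γ s = m s • η s := by
    intro s
    rw [hm s, hη s]
    exact key_frame (γ s) (v s) (deriv γ s) (hga s) (hleg s) (hgg s) (hvv s) (hortho s)
  -- m differentiable
  have hmd : Differentiable ℝ m := by
    have : Differentiable ℝ (fun s => ⟪deriv γ s, cross (γ s) (v s)⟫) :=
      Differentiable.inner ℝ hγ'd (cross_diff γ v hγ hv)
    have e : m = fun s => ⟪deriv γ s, cross (γ s) (v s)⟫ := funext fun s => by rw [hm s, hη s]
    rw [e]; exact this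
  have h1md : Differentiable ℝ (fun t => 1 / m t) := fun s =>
    (differentiableAt_const 1).div (hmd s) (hm0 s)
  -- main derivative computation
  have main : ∀ s, deriv φ s = -(deriv (fun t => 1 / m t) s) • γ s := by
    intro s
    have hβ'' : HasDerivAt β (η s) s := by
      have := (hβd s).hasDerivAt; rwa [hβ' s] at this
    have h1m : HasDerivAt (fun t => 1 / m t) (deriv (fun t => 1 / m t) s) s :=
      (h1md s).hasDerivAt
    have hγ'' : HasDerivAt γ (deriv γ s) s := (hγd s).hasDerivAt
    have hsm : HasDerivAt (fun t => (1 / m t) • γ t)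
        ((1 / m s) • deriv γ s + (deriv (fun t => 1 / m t) s) • γ s) s := h1m.smul hγ''
    have hφd : HasDerivAt φ (η s - ((1 / m s) • deriv γ s + (deriv (fun t => 1 / m t) s) • γ s)) s := by
      have e : φ = fun t => β t - (1 / m t) • γ t := funext fun t => hφ t
      rw [e]; exact hβ''.sub hsm
    have hcancel : (1 / m s) • deriv γ s = η s := by
      rw [hγ' s, smul_smul, one_div, inv_mul_cancel₀ (hm0 s), one_smul]
    rw [hφd.deriv, hcancel]
    module
  refine ⟨main, fun hc => ?_⟩
  have hder0 : ∀ s, deriv φ s = 0 := by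
    intro s
    rw [main s]
    have e : (fun t => 1 / m t) = fun _ => 1 / m 0 := funext fun t => by rw [hc t 0]
    rw [e, deriv_const]
    simp
  refine ⟨hder0, ?_⟩
  have hφdiff : Differentiable ℝ φ := by
    have e : φ = fun t => β t - (1 / m t) • γ t := funext fun t => hφ t
    rw [e]
    exact hβd.sub (h1md.smul hγd)
  exact fun s t => is_const_of_deriv_eq_zero hφdiff hder0 s t
end
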